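/- In the polynomial ring 𝒯 the identity (T₂ − T₁²)·(T₄(T₂ − T₁²) + 2T₃T₂T₁ − T₃² − T₂³) = Tr(((T₁² − T₂)x² + (T₃ − T₂T₁)x + (T₂² − T₃T₁))²) holds, where the right-hand side is the image under Tr of the square of the trace polynomial (T₁² − T₂)x² + (T₃ − T₂T₁)x + (T₂² − T₃T₁) ∈ 𝔗. -/
import Mathlib


noncomputable section

/-- The ring 𝒯 of pure trace polynomials: `MvPolynomial.X j` stands for the symbol `Tr(x^j)`
(for `j ≥ 1`; the variable of index `0` is unused). -/
abbrev TP : Type := MvPolynomial ℕ ℝ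

/-- The ring 𝔗 = 𝒯[x] of univariate trace polynomials. -/
abbrev TPoly : Type := Polynomial TP

/-- The symbol `T_j = Tr(x^j)`, with `T₀ = Tr(1) = 1`. -/
def Tj (j : ℕ) : TP := if j = 0 then 1 else MvPolynomial.X j

/-- The 𝒯-linear trace map `Tr : 𝔗 → 𝒯`, determined by `x^j ↦ T_j` and `Tr(1) = 1`. -/
def TrF (f : TPoly) : TP := f.sum fun j c => c * Tj j

/-- The normalized trace moments `j ↦ (1/n)·tr(X^j)` of a matrix. -/
def nTr {n : ℕ} (X : Matrix (Fin n) (Fin n) ℝ) (j : ℕ) : ℝ := (n : ℝ)⁻¹ * (X ^ j).trace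

/-- Evaluation of a pure trace polynomial at a matrix (`T_j ↦ (1/n)·tr(X^j)`). -/
def evalT {n : ℕ} (X : Matrix (Fin n) (Fin n) ℝ) (p : TP) : ℝ := MvPolynomial.eval (nTr X) p

/-- Evaluation of a trace polynomial at a symmetric matrix: substitute `X` for `x` and
`(1/n)·tr(X^j)` for `T_j`. -/
def evalM {n : ℕ} (X : Matrix (Fin n) (Fin n) ℝ) (f : TPoly) : Matrix (Fin n) (Fin n) ℝ :=
  Polynomial.eval₂ ((Matrix.scalar (Fin n)).comp (MvPolynomial.eval (nTr X))) X f

/-- Membership in the preordering generated by `S` inside a commutative ring, where the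
allowed squares are squares of elements of `Sq` (take `Sq = Set.univ` for the preordering in
the whole ring): the smallest set containing `S` and the squares of elements of `Sq` that is
closed under addition and multiplication. -/
inductive InPre {R : Type*} [CommRing R] (Sq : Set R) (S : Set R) : R → Prop
  | of {s : R} : s ∈ S → InPre Sq S s
  | sq {r : R} : r ∈ Sq → InPre Sq S (r ^ 2)
  | add {a b : R} : InPre Sq S a → InPre Sq S b → InPre Sq S (a + b)
  | mul {a b : R} : InPre Sq S a → InPre Sq S b → InPre Sq S (a * b)

/-- The preordering Ω in 𝒯 generated by traces of squares of trace polynomials. -/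
def Omega : TP → Prop := InPre Set.univ {p | ∃ g : TPoly, p = TrF (g ^ 2)}

/-- `σ_j(M)`: the coefficients of the characteristic polynomial,
`det(t·I − M) = t^m − σ₁(M) t^{m−1} + ⋯ + (−1)^m σ_m(M)`. -/
def sigmaCoeff {R : Type*} [CommRing R] {m : ℕ} (j : ℕ) (M : Matrix (Fin m) (Fin m) R) : R :=
  (-1 : R) ^ j * M.charpoly.coeff (m - j)

/-- The Hankel matrix `Han_d` over 𝒯, with `(i,j)` entry `T_{i+j}` (0-indexed), `T₀ = 1`. -/
def HanT (d : ℕ) : Matrix (Fin (d+1)) (Fin (d+1)) TP := fun i j => Tj (i.val + j.val)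

/-- Extension of a point `γ ∈ ℝ^{2d}` (where `γ i` is the value of `T_{i+1}`) to all indices,
with `T₀ ↦ 1`. -/
def extPt (d : ℕ) (γ : Fin (2*d) → ℝ) : ℕ → ℝ :=
  fun j => if h : 0 < j ∧ j ≤ 2*d then γ ⟨j - 1, by omega⟩ else 1

/-- Evaluation `s[γ]` of `s ∈ 𝒯_{2d}` at `γ ∈ ℝ^{2d}`. -/
def evalPt (d : ℕ) (γ : Fin (2*d) → ℝ) (s : TP) : ℝ := MvPolynomial.eval (extPt d γ) s

/-- Evaluation `f[β]` of `f ∈ 𝔗_{2d}` at `β = (b₀, γ) ∈ ℝ^{1+2d}` (`x ↦ b₀`, `T_j ↦ γ_j`). -/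
def evalPt' (d : ℕ) (b₀ : ℝ) (γ : Fin (2*d) → ℝ) (f : TPoly) : ℝ :=
  Polynomial.eval₂ (MvPolynomial.eval (extPt d γ)) b₀ f

/-- The real Hankel matrix `Han_d[γ]`. -/
def hankelPt (d : ℕ) (γ : Fin (2*d) → ℝ) : Matrix (Fin (d+1)) (Fin (d+1)) ℝ :=
  fun i j => extPt d γ (i.val + j.val)

/-- The set `L_S ⊆ ℝ^{2d}`. -/
def LSet (d : ℕ) (S : Finset TP) : Set (Fin (2*d) → ℝ) :=
  {γ | (∀ s ∈ S, 0 ≤ evalPt d γ s) ∧ (hankelPt d γ).PosSemidef}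


/-- The variable `T_j = Tr(x^j)` of `𝒯`. -/
def Tv (j : ℕ) : TP := MvPolynomial.X j


lemma TrF_add' (f g : TPoly) : TrF (f + g) = TrF f + TrF g :=
  Polynomial.sum_add_index f g _ (fun _ => zero_mul _) (fun _ _ _ => add_mul _ _ _)

lemma TrF_monomial' (k : ℕ) (a : TP) : TrF (Polynomial.C a * Polynomial.X ^ k) = a * Tj k := by
  rw [Polynomial.C_mul_X_pow_eq_monomial]
  simp [TrF, Polynomial.sum_monomial_index]

/-- The certificate identity
`(T₂ − T₁²)·f = Tr(((T₁² − T₂)x² + (T₃ − T₂T₁)x + (T₂² − T₃T₁))²)`. -/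
theorem stmt_11 :
    (Tv 2 - Tv 1 ^ 2) *
      (Tv 4 * (Tv 2 - Tv 1 ^ 2) + 2 * Tv 3 * Tv 2 * Tv 1 - Tv 3 ^ 2 - Tv 2 ^ 3) =
    TrF ((Polynomial.C (Tv 1 ^ 2 - Tv 2) * Polynomial.X ^ 2
        + Polynomial.C (Tv 3 - Tv 2 * Tv 1) * Polynomial.X
        + Polynomial.C (Tv 2 ^ 2 - Tv 3 * Tv 1)) ^ 2) := by
  have h : ((Polynomial.C (Tv 1 ^ 2 - Tv 2) * Polynomial.X ^ 2
        + Polynomial.C (Tv 3 - Tv 2 * Tv 1) * Polynomial.X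
        + Polynomial.C (Tv 2 ^ 2 - Tv 3 * Tv 1)) ^ 2 : TPoly)
      = Polynomial.C ((Tv 1 ^ 2 - Tv 2)^2) * Polynomial.X ^ 4
      + Polynomial.C (2*(Tv 1 ^ 2 - Tv 2)*(Tv 3 - Tv 2 * Tv 1)) * Polynomial.X ^ 3
      + Polynomial.C (2*(Tv 1 ^ 2 - Tv 2)*(Tv 2 ^ 2 - Tv 3 * Tv 1) + (Tv 3 - Tv 2 * Tv 1)^2) * Polynomial.X ^ 2
      + Polynomial.C (2*(Tv 3 - Tv 2 * Tv 1)*(Tv 2 ^ 2 - Tv 3 * Tv 1)) * Polynomial.X ^ 1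
      + Polynomial.C ((Tv 2 ^ 2 - Tv 3 * Tv 1)^2) * Polynomial.X ^ 0 := by
    simp only [map_sub, map_add, map_mul, map_pow, map_ofNat]
    ring
  rw [h, TrF_add', TrF_add', TrF_add', TrF_add', TrF_monomial', TrF_monomial', TrF_monomial',
    TrF_monomial', TrF_monomial']
  simp only [Tj]
  norm_num [Tv]
  ring

end
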